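/- Let G be a graph on [r] with no isolated vertex and J = J(G) its cover ideal. Then δ(J) = r/2 + (1/2)·max{|N(S)| − |S| : S is an independent set of G such that G\N[S] has no bipartite connected component}, where δ(J) is the maximum of the coordinate sums of the vertices of the polyhedron SP(G) = {x ∈ ℝ^r : x_i + x_j ≥ 1 for edges {i,j}, x ≥ 0}. -/

import Mathlib

/-!
`SP(G)` is cut out by the inequalities `x i ≥ 0` and `x i + x j ≥ 1`, so a point `v` of it is
extreme exactly when the only direction keeping every constraint tight at `v` tight is `0`.
At an extreme point, moving the coordinates outside `{0, 1/2, 1}` along such a direction shows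
that `v` is half-integral, and then `v = x_S` for the independent set `S = {v = 0}`, where `x_S`
is `0` on `S`, `1` on `N(S)` and `1/2` on the rest. The directions keeping the tight constraints
of `x_S` tight are the functions supported on `G \ N[S]` that change sign along each of its
edges, and a nonzero one exists iff `G \ N[S]` has a bipartite component. So the extreme points
are exactly the `x_S` of the theorem, and `2 ∑ x_S - r = |N(S)| - |S|`.
-/

/-- The polyhedron `SP(G) = {x ∈ ℝ^V : x i + x j ≥ 1 for all edges ij, x ≥ 0}`. -/
def SPgraph {V : Type*} (G : SimpleGraph V) : Set (V → ℝ) :=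
  {x | (∀ i j, G.Adj i j → 1 ≤ x i + x j) ∧ ∀ i, 0 ≤ x i}

/-- The (open) neighbourhood of a set of vertices. -/
def nbhdSet {V : Type*} (G : SimpleGraph V) (S : Set V) : Set V :=
  {v | v ∉ S ∧ ∃ u ∈ S, G.Adj u v}

/-- `S` is an independent set of `G`. -/
def indepSet {V : Type*} (G : SimpleGraph V) (S : Set V) : Prop :=
  ∀ u ∈ S, ∀ v ∈ S, ¬ G.Adj u v

/-- The connected component of `v` in `H` is bipartite (one-vertex components
count as bipartite). -/
def componentBipartite {W : Type*} (H : SimpleGraph W) (v : W) : Prop :=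
  ∃ c : W → Bool, ∀ u w, H.Reachable v u → H.Reachable v w → H.Adj u w → c u ≠ c w

/-- The induced subgraph of `G` on the complement of `N[S]` has no bipartite
connected component. -/
def noBipartiteCompOutsideClosedNbhd {V : Type*} (G : SimpleGraph V) (S : Set V) : Prop :=
  ∀ v : ((S ∪ nbhdSet G S)ᶜ : Set V),
    ¬ componentBipartite (G.induce ((S ∪ nbhdSet G S)ᶜ)) v

open Filter Topology

theorem eq_zero_of_add_mem_of_sub_mem_extremePoints {𝕜 E : Type*} [Field 𝕜] [LinearOrder 𝕜]
    [IsStrictOrderedRing 𝕜] [AddCommGroup E] [Module 𝕜 E] {A : Set E} {x d : E}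
    (hx : x ∈ A.extremePoints 𝕜) (hadd : x + d ∈ A) (hsub : x - d ∈ A) : d = 0 := by
  have hmid : x ∈ openSegment 𝕜 (x + d) (x - d) :=
    ⟨2⁻¹, 2⁻¹, by norm_num, by norm_num, by norm_num, by module⟩
  simpa using hx.2 hadd hsub hmid

namespace SimpleGraph

variable {W : Type*} {H : SimpleGraph W} {f : W → ℝ}

theorem Reachable.abs_eq_of_forall_adj_add_eq_zero (hf : ∀ u w, H.Adj u w → f u + f w = 0)
    {u w : W} (h : H.Reachable u w) : |f w| = |f u| := by
  obtain ⟨p⟩ := h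
  induction p with
  | nil => rfl
  | cons hadj _ ih => rw [ih, eq_neg_of_add_eq_zero_right (hf _ _ hadj), abs_neg]

end SimpleGraph

open SimpleGraph

theorem componentBipartite_iff_exists_forall_adj_add_eq_zero {W : Type*} {H : SimpleGraph W}
    {v : W} :
    componentBipartite H v ↔ ∃ f : W → ℝ, f v ≠ 0 ∧ ∀ u w, H.Adj u w → f u + f w = 0 := by
  classical
  constructor
  · rintro ⟨c, hc⟩
    refine ⟨fun u => if H.Reachable v u then (if c u then 1 else -1) else 0,
      by simp only [Reachable.refl, ite_true]; split_ifs <;> norm_num, fun u w huw => ?_⟩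
    by_cases hu : H.Reachable v u
    · have hw := hu.trans huw.reachable
      have hcuw := hc u w hu hw huw
      cases hcu : c u <;> cases hcw : c w <;> simp_all
    · have hw : ¬ H.Reachable v w := fun hw => hu (hw.trans huw.symm.reachable)
      simp [hu, hw]
  · rintro ⟨f, hv, hf⟩
    refine ⟨fun u => decide (0 < f u), fun u w hu _ huw => ?_⟩
    have hu0 : f u ≠ 0 := by
      rw [← abs_ne_zero, hu.abs_eq_of_forall_adj_add_eq_zero hf]
      exact abs_ne_zero.2 hv
    have hw : f w = -f u := eq_neg_of_add_eq_zero_right (hf u w huw)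
    simp only [ne_eq, decide_eq_decide, hw, neg_pos]
    rcases hu0.lt_or_gt with h | h <;> simp [h, h.not_gt]

theorem eventually_le_add_mul {a b c : ℝ} (hca : c ≤ a) (hb : a = c → b = 0) :
    ∀ᶠ t in 𝓝 (0 : ℝ), c ≤ a + t * b := by
  rcases hca.eq_or_lt with rfl | hlt
  · simp [hb rfl]
  · have hcont : Continuous fun t : ℝ => a + t * b := by fun_prop
    exact (hcont.tendsto' 0 a (by simp)).eventually (lt_mem_nhds hlt) |>.mono fun _ => le_of_lt

section SPgraph

variable {V : Type*} {G : SimpleGraph V} {v d : V → ℝ}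

def IsTightDirection (G : SimpleGraph V) (v d : V → ℝ) : Prop :=
  (∀ j, v j = 0 → d j = 0) ∧ ∀ p q, G.Adj p q → v p + v q = 1 → d p + d q = 0

theorem eventually_add_smul_mem_SPgraph [Finite V] (hv : v ∈ SPgraph G)
    (hd : IsTightDirection G v d) : ∀ᶠ t in 𝓝 (0 : ℝ), v + t • d ∈ SPgraph G := by
  simp only [SPgraph, Set.mem_ofPred_eq, Pi.add_apply, Pi.smul_apply, smul_eq_mul,
    eventually_and, eventually_all]
  refine ⟨fun p q hpq => ?_, fun j => eventually_le_add_mul (hv.2 j) (hd.1 j)⟩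
  filter_upwards [eventually_le_add_mul (hv.1 p q hpq) (hd.2 p q hpq)] with t ht
  linarith

theorem eq_zero_of_isTightDirection [Finite V] (hv : v ∈ (SPgraph G).extremePoints ℝ)
    (hd : IsTightDirection G v d) : d = 0 := by
  obtain ⟨ε, hε, hball⟩ := Metric.eventually_nhds_iff.1 (eventually_add_smul_mem_SPgraph hv.1 hd)
  have hmem : ∀ t : ℝ, |t| < ε → v + t • d ∈ SPgraph G := fun t ht => hball (by simpa using ht)
  have hadd := hmem (ε / 2) (by rw [abs_of_pos (by positivity)]; linarith)
  have hsub := hmem (-(ε / 2)) (by rw [abs_neg, abs_of_pos (by positivity)]; linarith)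
  rw [neg_smul, ← sub_eq_add_neg] at hsub
  simpa [hε.ne'] using eq_zero_of_add_mem_of_sub_mem_extremePoints hv hadd hsub

theorem isTightDirection_sub_of_mem_openSegment {y z : V → ℝ} (hy : y ∈ SPgraph G)
    (hz : z ∈ SPgraph G) (hv : v ∈ openSegment ℝ y z) : IsTightDirection G v (y - v) := by
  obtain ⟨a, b, ha, hb, hab, rfl⟩ := hv
  -- a constraint tight at an interior point of a segment is tight at both ends
  have tight {c s t : ℝ} (hs : c ≤ s) (ht : c ≤ t) (h : a * s + b * t = c) : s = c := by
    refine (hs.eq_or_lt.resolve_right fun hlt => ?_).symm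
    nlinarith [mul_nonneg hb.le (sub_nonneg.2 ht), mul_pos ha (sub_pos.2 hlt), congrArg (· * c) hab]
  constructor
  · intro j hj
    simp only [Pi.add_apply, Pi.smul_apply, smul_eq_mul, Pi.sub_apply] at hj ⊢
    rw [hj, tight (hy.2 j) (hz.2 j) hj, sub_zero]
  · intro p q hpq hpq1
    simp only [Pi.add_apply, Pi.smul_apply, smul_eq_mul, Pi.sub_apply] at hpq1 ⊢
    have := tight (hy.1 p q hpq) (hz.1 p q hpq) (by linarith)
    linarith

theorem mem_extremePoints_SPgraph_iff [Finite V] :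
    v ∈ (SPgraph G).extremePoints ℝ ↔ v ∈ SPgraph G ∧ ∀ d, IsTightDirection G v d → d = 0 := by
  refine ⟨fun hv => ⟨hv.1, fun d => eq_zero_of_isTightDirection hv⟩, fun ⟨hv, hrigid⟩ => ?_⟩
  refine mem_extremePoints_iff_left.2 ⟨hv, fun y hy z hz hvyz => ?_⟩
  exact sub_eq_zero.1 (hrigid _ (isTightDirection_sub_of_mem_openSegment hy hz hvyz))

end SPgraph

section HalfIntegral

variable {V : Type*} {G : SimpleGraph V} {S : Set V} {v : V → ℝ}

open Classical in
noncomputable def halfIntegralPoint (G : SimpleGraph V) (S : Set V) : V → ℝ :=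
  fun i => if i ∈ S then 0 else if i ∈ nbhdSet G S then 1 else 1 / 2

theorem halfIntegralPoint_of_mem {i : V} (hi : i ∈ S) : halfIntegralPoint G S i = 0 := by
  simp [halfIntegralPoint, hi]

theorem halfIntegralPoint_of_mem_nbhdSet {i : V} (hi : i ∈ nbhdSet G S) :
    halfIntegralPoint G S i = 1 := by
  simp [halfIntegralPoint, hi, hi.1]

theorem halfIntegralPoint_eq_zero_iff {i : V} : halfIntegralPoint G S i = 0 ↔ i ∈ S := by
  unfold halfIntegralPoint
  split_ifs <;> norm_num [*]

theorem halfIntegralPoint_eq_half_iff {i : V} :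
    halfIntegralPoint G S i = 1 / 2 ↔ i ∈ (S ∪ nbhdSet G S)ᶜ := by
  unfold halfIntegralPoint
  split_ifs <;> norm_num [*]

theorem halfIntegralPoint_mem_SPgraph (hS : indepSet G S) : halfIntegralPoint G S ∈ SPgraph G := by
  have half_le {i : V} (hi : i ∉ S) : 1 / 2 ≤ halfIntegralPoint G S i := by
    simp only [halfIntegralPoint, hi, if_false]
    split_ifs <;> norm_num
  refine ⟨fun i j hij => ?_, fun i => ?_⟩
  · by_cases hi : i ∈ S
    · rw [halfIntegralPoint_of_mem hi,
        halfIntegralPoint_of_mem_nbhdSet ⟨fun hj => hS i hi j hj hij, i, hi, hij⟩]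
      norm_num
    by_cases hj : j ∈ S
    · rw [halfIntegralPoint_of_mem hj, halfIntegralPoint_of_mem_nbhdSet ⟨hi, j, hj, hij.symm⟩]
      norm_num
    linarith [half_le hi, half_le hj]
  · by_cases hi : i ∈ S
    · rw [halfIntegralPoint_of_mem hi]
    · linarith [half_le hi]

theorem two_mul_sum_halfIntegralPoint [Fintype V] (S : Set V) :
    2 * ∑ i, halfIntegralPoint G S i - Fintype.card V = ((nbhdSet G S).ncard : ℝ) - S.ncard := by
  classical
  have hpoint (i : V) : 2 * halfIntegralPoint G S i - 1 =
      (if i ∈ nbhdSet G S then 1 else 0) - (if i ∈ S then 1 else 0) := by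
    by_cases hi : i ∈ S
    · have hn : i ∉ nbhdSet G S := fun h => h.1 hi
      simp [halfIntegralPoint, hi, hn]
    · by_cases hn : i ∈ nbhdSet G S <;> norm_num [halfIntegralPoint, hi, hn]
  rw [Finset.mul_sum, ← Finset.card_univ, ← nsmul_one, ← Finset.sum_const,
    ← Finset.sum_sub_distrib, Finset.sum_congr rfl fun i _ => hpoint i, Finset.sum_sub_distrib,
    Finset.sum_boole, Finset.sum_boole, Set.filter_mem_univ_eq_toFinset, Set.filter_mem_univ_eq_toFinset,
    Set.ncard_eq_toFinset_card', Set.ncard_eq_toFinset_card']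

theorem isTightDirection_halfIntegralPoint_iff {d : V → ℝ} :
    IsTightDirection G (halfIntegralPoint G S) d ↔
      (∀ j ∉ (S ∪ nbhdSet G S)ᶜ, d j = 0) ∧
        ∀ p ∈ (S ∪ nbhdSet G S)ᶜ, ∀ q ∈ (S ∪ nbhdSet G S)ᶜ, G.Adj p q → d p + d q = 0 := by
  constructor
  · rintro ⟨hzero, htight⟩
    refine ⟨fun j hj => ?_, fun p hp q hq hpq => htight p q hpq ?_⟩
    · rcases Set.notMem_compl_iff.1 hj with hjS | hjN
      · exact hzero j (halfIntegralPoint_of_mem hjS)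
      · obtain ⟨-, u, hu, huj⟩ := id hjN
        have := htight u j huj (by
          rw [halfIntegralPoint_of_mem hu, halfIntegralPoint_of_mem_nbhdSet hjN]; norm_num)
        linarith [hzero u (halfIntegralPoint_of_mem hu)]
    · rw [halfIntegralPoint_eq_half_iff.2 hp, halfIntegralPoint_eq_half_iff.2 hq]
      norm_num
  · rintro ⟨hout, hin⟩
    refine ⟨fun j hj => hout j ?_, fun p q hpq hsum => ?_⟩
    · exact Set.notMem_compl_iff.2 (Or.inl (halfIntegralPoint_eq_zero_iff.1 hj))
    have hpq_mem : p ∈ (S ∪ nbhdSet G S)ᶜ ↔ q ∈ (S ∪ nbhdSet G S)ᶜ := by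
      rw [← halfIntegralPoint_eq_half_iff, ← halfIntegralPoint_eq_half_iff]
      constructor <;> intro h <;> linarith
    by_cases hp : p ∈ (S ∪ nbhdSet G S)ᶜ
    · exact hin p hp q (hpq_mem.1 hp) hpq
    · rw [hout p hp, hout q (mt hpq_mem.2 hp), add_zero]

theorem forall_eq_zero_iff_not_componentBipartite {s : Set V} :
    (∀ d : V → ℝ, (∀ j ∉ s, d j = 0) → (∀ p ∈ s, ∀ q ∈ s, G.Adj p q → d p + d q = 0) → d = 0) ↔
      ∀ v : s, ¬ componentBipartite (G.induce s) v := by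
  constructor
  · intro h v₀ hv₀
    obtain ⟨f, hf₀, hf⟩ := componentBipartite_iff_exists_forall_adj_add_eq_zero.1 hv₀
    classical
    let d : V → ℝ := fun j => if hj : j ∈ s then f ⟨j, hj⟩ else 0
    have hd := h d (fun j hj => dif_neg hj) fun p hp q hq hpq => by
      simpa [d, hp, hq] using hf ⟨p, hp⟩ ⟨q, hq⟩ hpq
    exact hf₀ (by simpa [d] using congrFun hd v₀)
  · intro h d hout hin
    by_contra hne
    obtain ⟨j, hj⟩ := Function.ne_iff.1 hne
    have hjs : j ∈ s := by_contra fun hjs => hj (hout j hjs)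
    exact h ⟨j, hjs⟩ (componentBipartite_iff_exists_forall_adj_add_eq_zero.2
      ⟨fun u => d u, hj, fun u w huw => hin u u.2 w w.2 huw⟩)

theorem halfIntegralPoint_mem_extremePoints_iff [Finite V] (hS : indepSet G S) :
    halfIntegralPoint G S ∈ (SPgraph G).extremePoints ℝ ↔ noBipartiteCompOutsideClosedNbhd G S := by
  rw [mem_extremePoints_SPgraph_iff, noBipartiteCompOutsideClosedNbhd,
    ← forall_eq_zero_iff_not_componentBipartite]
  simp only [isTightDirection_halfIntegralPoint_iff, and_imp, halfIntegralPoint_mem_SPgraph hS,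
    true_and]

theorem indepSet_setOf_eq_zero (hv : v ∈ SPgraph G) : indepSet G {i | v i = 0} :=
  fun u hu w hw huw => by linarith [hv.1 u w huw, show v u = 0 from hu, show v w = 0 from hw]

theorem mem_zero_half_one_of_mem_extremePoints [Finite V] (hv : v ∈ (SPgraph G).extremePoints ℝ)
    (i : V) : v i = 0 ∨ v i = 1 / 2 ∨ v i = 1 := by
  classical
  -- Pushing coordinates in `(0, 1/2)` up and the other non-half-integral ones down keeps every
  -- tight edge tight, since `1 - x` is non-half-integral on the other side of `1/2`.
  let d : V → ℝ := fun j =>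
    if v j = 0 ∨ v j = 1 / 2 ∨ v j = 1 then 0 else if v j < 1 / 2 then 1 else -1
  have hd : IsTightDirection G v d := by
    refine ⟨fun j hj => if_pos (Or.inl hj), fun p q hpq hsum => ?_⟩
    have hq : v q = 1 - v p := by linarith
    simp only [d, hq]
    split_ifs <;> grind
  by_contra h
  have hdi := congrFun (eq_zero_of_isTightDirection hv hd) i
  simp only [d, if_neg h] at hdi
  split_ifs at hdi <;> norm_num at hdi

theorem eq_halfIntegralPoint_of_mem_extremePoints [Finite V]
    (hv : v ∈ (SPgraph G).extremePoints ℝ) : v = halfIntegralPoint G {i | v i = 0} := by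
  funext i
  rcases mem_zero_half_one_of_mem_extremePoints hv i with h | h | h
  · rw [h, halfIntegralPoint_of_mem (S := {j | v j = 0}) h]
  · rw [h, eq_comm, halfIntegralPoint_eq_half_iff]
    rintro (hS | ⟨-, u, hu, hui⟩)
    · norm_num [show v i = 0 from hS] at h
    · linarith [hv.1.1 u i hui, show v u = 0 from hu]
  · rw [h, halfIntegralPoint_of_mem_nbhdSet]
    refine ⟨by norm_num [h], ?_⟩
    by_contra! hno
    have hpos (u : V) (hu : G.Adj u i) : 0 < v u := (hv.1.2 u).lt_of_ne' fun h0 => hno u h0 hu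
    classical
    -- no tight edge contains `i`, so `i` can be moved alone
    have hd : IsTightDirection G v (Pi.single i 1) := by
      refine ⟨fun j hj => Pi.single_eq_of_ne (by rintro rfl; norm_num [h] at hj) _,
        fun p q hpq hsum => ?_⟩
      rcases eq_or_ne p i with rfl | hp
      · linarith [hpos q hpq.symm]
      rcases eq_or_ne q i with rfl | hq
      · linarith [hpos p hpq]
      simp [hp, hq]
    simpa using congrFun (eq_zero_of_isTightDirection hv hd) i

end HalfIntegral

theorem delta_coverIdeal_formula_general
    {r : ℕ} (G : SimpleGraph (Fin r))
    (δ : ℝ)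
    (hδ : IsGreatest {x : ℝ | ∃ v ∈ Set.extremePoints ℝ (SPgraph G), x = ∑ i, v i} δ) :
    IsGreatest {x : ℝ | ∃ S : Set (Fin r),
        indepSet G S ∧ noBipartiteCompOutsideClosedNbhd G S ∧
        x = ((nbhdSet G S).ncard : ℝ) - (S.ncard : ℝ)}
      (2 * δ - r) := by
  obtain ⟨⟨v, hv, rfl⟩, hδ_max⟩ := hδ
  have hS := indepSet_setOf_eq_zero hv.1
  have hv_eq := eq_halfIntegralPoint_of_mem_extremePoints hv
  refine ⟨⟨{i | v i = 0}, hS, (halfIntegralPoint_mem_extremePoints_iff hS).1 (hv_eq ▸ hv), ?_⟩, ?_⟩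
  · rw [← two_mul_sum_halfIntegralPoint, Fintype.card_fin, ← hv_eq]
  · rintro _ ⟨S, hS, hB, rfl⟩
    have hle := hδ_max ⟨_, (halfIntegralPoint_mem_extremePoints_iff hS).2 hB, rfl⟩
    rw [← two_mul_sum_halfIntegralPoint, Fintype.card_fin]
    linarith

/-- for a graph `G` on `[r]` with no isolated vertex,
`δ(J(G)) = r/2 + (1/2)·max{|N(S)| − |S|}`, the max over independent sets `S`
such that `G \ N[S]` has no bipartite component; `δ(J(G))` is the maximal
coordinate sum of a vertex of `SP(G)`. -/
theorem delta_coverIdeal_formula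
    {r : ℕ} (G : SimpleGraph (Fin r))
    (hiso : ∀ i, ∃ j, G.Adj i j)
    (δ : ℝ)
    (hδ : IsGreatest {x : ℝ | ∃ v ∈ Set.extremePoints ℝ (SPgraph G), x = ∑ i, v i} δ) :
    IsGreatest {x : ℝ | ∃ S : Set (Fin r),
        indepSet G S ∧ noBipartiteCompOutsideClosedNbhd G S ∧
        x = ((nbhdSet G S).ncard : ℝ) - (S.ncard : ℝ)}
      (2 * δ - r) :=
  delta_coverIdeal_formula_general G δ hδ
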